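/- For every E ∈ (−2, 2), the principal value integral ∫_{−2}^{2} √(4 − t²)/(t − E) dt, i.e. the limit as ε → 0⁺ of ∫_{t∈[−2,2], |t−E|>ε} √(4 − t²)/(t − E) dt, exists and equals −πE. -/

import Mathlib

/-!
With `s = √(r² - E²)` and `ρ(t) = √(r² - t²)`, the function
`F(t) = ρ(t) - E arcsin (t / r) - s log (r² - E t + s ρ(t)) + s log |t - E|`
is a primitive of `ρ(t) / (t - E)` on `[-r, r] \ {E}`. Its only singularity is the term
`s log |t - E|` (in Lean simply `s * log (t - E)`, as `Real.log` is even), which takes the same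
value at `E - ε` and `E + ε`; hence the truncated integrals equal `F(r) - F(-r)` up to an error
tending to `0`, and `F(r) - F(-r) = -πE`.
-/

open Filter Topology MeasureTheory Set Real

section PrincipalValue

variable {f F H : ℝ → ℝ} {a b c E : ℝ}

lemma setOf_mem_Icc_lt_abs_sub_eq_union {ε : ℝ} (haE : a ≤ E) (hEb : E ≤ b) (hε : 0 ≤ ε) :
    {t : ℝ | t ∈ Icc a b ∧ ε < |t - E|} = Ico a (E - ε) ∪ Ioc (E + ε) b := by
  ext t
  simp only [mem_ofPred_eq, mem_Icc, mem_union, mem_Ico, mem_Ioc, lt_abs]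
  constructor
  · rintro ⟨⟨hat, htb⟩, h | h⟩
    · exact .inr ⟨by linarith, htb⟩
    · exact .inl ⟨hat, by linarith⟩
  · rintro (⟨hat, ht⟩ | ⟨ht, htb⟩)
    · exact ⟨⟨hat, by linarith⟩, .inr (by linarith)⟩
    · exact ⟨⟨by linarith, htb⟩, .inl (by linarith)⟩

section Primitive

variable (hF : ContinuousOn F (Icc a b \ {E}))
  (hderiv : ∀ t ∈ Ioo a b, t ≠ E → HasDerivAt F (f t) t) (hf : ContinuousOn f (Icc a b \ {E}))
include hF hderiv hf

lemma integral_Icc_eq_sub_of_hasDerivAt_of_notMem {u v : ℝ} (huv : u ≤ v) (hau : a ≤ u)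
    (hvb : v ≤ b) (hE : E ∉ Icc u v) : ∫ t in Icc u v, f t = F v - F u := by
  have hsub : Icc u v ⊆ Icc a b \ {E} :=
    fun t ht => ⟨Icc_subset_Icc hau hvb ht, fun h => hE (h ▸ ht)⟩
  rw [integral_Icc_eq_integral_Ioc, ← intervalIntegral.integral_of_le huv]
  refine intervalIntegral.integral_eq_sub_of_hasDeriv_right_of_le huv (hF.mono hsub)
    (fun t ht => ?_) ((hf.mono hsub).intervalIntegrable_of_Icc huv)
  exact (hderiv t (Ioo_subset_Ioo hau hvb ht) (hsub (Ioo_subset_Icc_self ht)).2).hasDerivWithinAt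

lemma tendsto_integral_punctured_Icc (haE : a < E) (hEb : E < b) {L : ℝ}
    (hsing : Tendsto (fun ε => F (E - ε) - F (E + ε)) (𝓝[>] 0) (𝓝 L)) :
    Tendsto (fun ε => ∫ t in {t : ℝ | t ∈ Icc a b ∧ ε < |t - E|}, f t) (𝓝[>] 0)
      (𝓝 (F b - F a + L)) := by
  refine (hsing.const_add (F b - F a)).congr' ?_
  filter_upwards [Ioo_mem_nhdsGT (lt_min (sub_pos.2 haE) (sub_pos.2 hEb))] with ε hε
  obtain ⟨hε0, hεδ⟩ := hε
  have hεa : ε < E - a := hεδ.trans_le (min_le_left _ _)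
  have hεb : ε < b - E := hεδ.trans_le (min_le_right _ _)
  have hL : Icc a (E - ε) ⊆ Icc a b \ {E} :=
    fun t ht => ⟨⟨ht.1, by linarith [ht.2]⟩, (ht.2.trans_lt (by linarith)).ne⟩
  have hR : Icc (E + ε) b ⊆ Icc a b \ {E} :=
    fun t ht => ⟨⟨by linarith [ht.1], ht.2⟩, ((show E < E + ε by linarith).trans_le ht.1).ne'⟩
  rw [setOf_mem_Icc_lt_abs_sub_eq_union haE.le hEb.le hε0.le,
    setIntegral_union (disjoint_left.2 fun t h1 h2 => by linarith [h1.2, h2.1]) measurableSet_Ioc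
      ((hf.mono hL).integrableOn_Icc.mono_set Ico_subset_Icc_self)
      ((hf.mono hR).integrableOn_Icc.mono_set Ioc_subset_Icc_self),
    ← integral_Icc_eq_integral_Ico, ← integral_Icc_eq_integral_Ioc,
    integral_Icc_eq_sub_of_hasDerivAt_of_notMem hF hderiv hf (by linarith) le_rfl (by linarith)
      (fun h => by linarith [h.2]),
    integral_Icc_eq_sub_of_hasDerivAt_of_notMem hF hderiv hf (by linarith) (by linarith) le_rfl
      (fun h => by linarith [h.1])]
  ring

end Primitive

lemma tendsto_add_log_sub_sub_add_log_add (hH : ContinuousAt H E) :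
    Tendsto (fun ε => (H (E - ε) + c * log (E - ε - E)) - (H (E + ε) + c * log (E + ε - E)))
      (𝓝 0) (𝓝 0) := by
  have hsub : Tendsto (fun ε => E - ε) (𝓝 0) (𝓝 E) := by
    simpa using (continuous_sub_left E).tendsto 0
  have hadd : Tendsto (fun ε => E + ε) (𝓝 0) (𝓝 E) := by
    simpa using (continuous_const_add E).tendsto 0
  simpa [log_neg_eq_log] using (hH.tendsto.comp hsub).sub (hH.tendsto.comp hadd)

lemma tendsto_integral_punctured_Icc_of_hasDerivAt_add_log (hH : ContinuousOn H (Icc a b))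
    (haE : a < E) (hEb : E < b)
    (hderiv : ∀ t ∈ Ioo a b, t ≠ E → HasDerivAt (fun x => H x + c * log (x - E)) (f t) t)
    (hf : ContinuousOn f (Icc a b \ {E})) :
    Tendsto (fun ε => ∫ t in {t : ℝ | t ∈ Icc a b ∧ ε < |t - E|}, f t) (𝓝[>] 0)
      (𝓝 ((H b + c * log (b - E)) - (H a + c * log (a - E)))) := by
  have hF : ContinuousOn (fun x => H x + c * log (x - E)) (Icc a b \ {E}) :=
    (hH.mono sdiff_subset).add <| continuousOn_const.mul <|
      (continuousOn_id.sub continuousOn_const).log fun t ht => sub_ne_zero.2 ht.2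
  simpa only [add_zero] using tendsto_integral_punctured_Icc hF hderiv hf haE hEb
    ((tendsto_add_log_sub_sub_add_log_add (hH.continuousAt (Icc_mem_nhds haE hEb))).mono_left
      nhdsWithin_le_nhds)

end PrincipalValue

section Semicircle

variable {r E t : ℝ}

lemma hasDerivAt_sqrt_sq_sub_sq (ht : r ^ 2 - t ^ 2 ≠ 0) :
    HasDerivAt (fun x => √(r ^ 2 - x ^ 2)) (-t / √(r ^ 2 - t ^ 2)) t := by
  have hsq : HasDerivAt (fun x => r ^ 2 - x ^ 2) (-(2 * t)) t :=
    ((hasDerivAt_pow 2 t).const_sub (r ^ 2)).congr_deriv (by push_cast; ring)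
  exact (hsq.sqrt ht).congr_deriv (by field_simp)

lemma hasDerivAt_arcsin_div (ht : t ∈ Ioo (-r) r) :
    HasDerivAt (fun x => arcsin (x / r)) (1 / √(r ^ 2 - t ^ 2)) t := by
  obtain ⟨ht1, ht2⟩ := ht
  have hr : 0 < r := by linarith
  have h1 : t / r ≠ -1 := by rw [Ne, div_eq_iff hr.ne']; linarith
  have h2 : t / r ≠ 1 := by rw [Ne, div_eq_iff hr.ne']; linarith
  have hsqrt : √(1 - (t / r) ^ 2) = √(r ^ 2 - t ^ 2) / r := by
    rw [show 1 - (t / r) ^ 2 = (r ^ 2 - t ^ 2) / r ^ 2 by field_simp, sqrt_div' _ (by positivity),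
      sqrt_sq hr.le]
  refine ((hasDerivAt_arcsin h1 h2).comp t ((hasDerivAt_id' t).div_const r)).congr_deriv ?_
  have : 0 < √(r ^ 2 - t ^ 2) := sqrt_pos.2 (by nlinarith)
  rw [hsqrt]
  field_simp

lemma semicircle_log_arg_pos (hE : E ∈ Ioo (-r) r) (ht : t ∈ Icc (-r) r) :
    0 < r ^ 2 - E * t + √(r ^ 2 - E ^ 2) * √(r ^ 2 - t ^ 2) := by
  obtain ⟨hE1, hE2⟩ := hE
  obtain ⟨ht1, ht2⟩ := ht
  have : E * t < r ^ 2 := by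
    rcases le_or_gt t E with h | h
    · nlinarith [mul_nonneg (by linarith : 0 ≤ r - E) (by linarith : 0 ≤ r + t)]
    · nlinarith [mul_nonneg (by linarith : 0 ≤ r + E) (by linarith : 0 ≤ r - t)]
  positivity

lemma hasDerivAt_log_semicircle_arg (hE : E ∈ Ioo (-r) r) (ht : t ∈ Ioo (-r) r) (htE : t ≠ E) :
    HasDerivAt (fun x => log (r ^ 2 - E * x + √(r ^ 2 - E ^ 2) * √(r ^ 2 - x ^ 2)))
      ((√(r ^ 2 - t ^ 2) - √(r ^ 2 - E ^ 2)) / (√(r ^ 2 - t ^ 2) * (t - E))) t := by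
  have hN := semicircle_log_arg_pos hE (Ioo_subset_Icc_self ht)
  obtain ⟨hE1, hE2⟩ := hE
  obtain ⟨ht1, ht2⟩ := ht
  have hρ : 0 < r ^ 2 - t ^ 2 := by nlinarith
  refine ((((hasDerivAt_id' t).const_mul E).const_sub (r ^ 2)).add
    ((hasDerivAt_sqrt_sq_sub_sq hρ.ne').const_mul _)).log hN.ne' |>.congr_deriv ?_
  have hs2 : √(r ^ 2 - E ^ 2) ^ 2 = r ^ 2 - E ^ 2 := sq_sqrt (by nlinarith)
  have hρ2 : √(r ^ 2 - t ^ 2) ^ 2 = r ^ 2 - t ^ 2 := sq_sqrt hρ.le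
  have hρ0 : √(r ^ 2 - t ^ 2) ≠ 0 := (sqrt_pos.2 hρ).ne'
  have htE' : t - E ≠ 0 := sub_ne_zero.2 htE
  set s := √(r ^ 2 - E ^ 2)
  set ρ := √(r ^ 2 - t ^ 2)
  -- cleared of denominators: `(E ρ + s t) (t - E) = (s - ρ) (r² - E t + s ρ)` modulo `s², ρ²`
  show (-(E * 1) + s * (-t / ρ)) / (r ^ 2 - E * t + s * ρ) = _
  rw [div_eq_div_iff hN.ne' (mul_ne_zero hρ0 htE')]
  field_simp
  linear_combination ρ * hs2 - s * hρ2

noncomputable def semicirclePrimitiveReg (r E t : ℝ) : ℝ :=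
  √(r ^ 2 - t ^ 2) - E * arcsin (t / r)
    - √(r ^ 2 - E ^ 2) * log (r ^ 2 - E * t + √(r ^ 2 - E ^ 2) * √(r ^ 2 - t ^ 2))

lemma continuousOn_semicirclePrimitiveReg (hE : E ∈ Ioo (-r) r) :
    ContinuousOn (semicirclePrimitiveReg r E) (Icc (-r) r) := by
  have hlog : ContinuousOn (fun t => log (r ^ 2 - E * t + √(r ^ 2 - E ^ 2) * √(r ^ 2 - t ^ 2)))
      (Icc (-r) r) :=
    ContinuousOn.log (by fun_prop) fun t ht => (semicircle_log_arg_pos hE ht).ne'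
  unfold semicirclePrimitiveReg
  fun_prop

lemma hasDerivAt_semicirclePrimitiveReg_add_log (hE : E ∈ Ioo (-r) r) (ht : t ∈ Ioo (-r) r)
    (htE : t ≠ E) :
    HasDerivAt (fun x => semicirclePrimitiveReg r E x + √(r ^ 2 - E ^ 2) * log (x - E))
      (√(r ^ 2 - t ^ 2) / (t - E)) t := by
  have hρ : 0 < r ^ 2 - t ^ 2 := by nlinarith [ht.1, ht.2]
  refine ((((hasDerivAt_sqrt_sq_sub_sq hρ.ne').sub ((hasDerivAt_arcsin_div ht).const_mul E)).sub
    ((hasDerivAt_log_semicircle_arg hE ht htE).const_mul _)).add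
    ((((hasDerivAt_id' t).sub_const E).log (sub_ne_zero.2 htE)).const_mul _)).congr_deriv ?_
  have hs2 : √(r ^ 2 - E ^ 2) ^ 2 = r ^ 2 - E ^ 2 := sq_sqrt (by nlinarith [hE.1, hE.2])
  have hρ2 : √(r ^ 2 - t ^ 2) ^ 2 = r ^ 2 - t ^ 2 := sq_sqrt hρ.le
  have hρ0 : √(r ^ 2 - t ^ 2) ≠ 0 := (sqrt_pos.2 hρ).ne'
  have htE' : t - E ≠ 0 := sub_ne_zero.2 htE
  field_simp
  linear_combination hs2 - hρ2

lemma semicirclePrimitiveReg_add_log_sub (hE : E ∈ Ioo (-r) r) :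
    (semicirclePrimitiveReg r E r + √(r ^ 2 - E ^ 2) * log (r - E))
      - (semicirclePrimitiveReg r E (-r) + √(r ^ 2 - E ^ 2) * log (-r - E)) = -(π * E) := by
  obtain ⟨hE1, hE2⟩ := hE
  have hr : 0 < r := by linarith
  have hrr : r / r = 1 := div_self hr.ne'
  simp only [semicirclePrimitiveReg, neg_div, hrr, arcsin_one, arcsin_neg, neg_sq, sub_self,
    sqrt_zero, mul_zero, add_zero]
  rw [show r ^ 2 - E * r = r * (r - E) by ring, show r ^ 2 - E * -r = r * (r + E) by ring,
    show -r - E = -(r + E) by ring, log_neg_eq_log,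
    log_mul hr.ne' (by linarith), log_mul hr.ne' (by linarith)]
  ring

end Semicircle

/-- For `E ∈ (−2,2)`, the principal value integral
`∫_{−2}^{2} √(4 − t²)/(t − E) dt`, i.e. the limit as `ε → 0⁺` of the integral over
`{t ∈ [−2,2] : |t − E| > ε}`, exists and equals `−πE`. -/
theorem stmt17 (E : ℝ) (hE : E ∈ Set.Ioo (-2 : ℝ) 2) :
    Tendsto (fun ε : ℝ =>
        ∫ t in {t : ℝ | t ∈ Set.Icc (-2 : ℝ) 2 ∧ ε < |t - E|}, Real.sqrt (4 - t ^ 2) / (t - E))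
      (𝓝[>] 0) (𝓝 (-(Real.pi * E))) := by
  have hf : ContinuousOn (fun t => √(2 ^ 2 - t ^ 2) / (t - E)) (Icc (-2) 2 \ {E}) :=
    ContinuousOn.div (by fun_prop) (by fun_prop) fun t ht => sub_ne_zero.2 ht.2
  have hpv := tendsto_integral_punctured_Icc_of_hasDerivAt_add_log
    (continuousOn_semicirclePrimitiveReg hE) hE.1 hE.2
    (fun t ht htE => hasDerivAt_semicirclePrimitiveReg_add_log hE ht htE) hf
  rw [semicirclePrimitiveReg_add_log_sub hE] at hpv
  simpa only [show (2 : ℝ) ^ 2 = 4 by norm_num] using hpv
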